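/- arXiv:1304.2338 — 3 statements merged into one kernel-verified Lean document; each statement's English description precedes it below -/
import Mathlib

section
/- Non-Euclidean gradient descent convergence: Let f : R^n → R be convex, continuously differentiable, with gradient L-Lipschitz with respect to a norm ‖·‖ (in the dual-norm sense). Let X* be the nonempty set of minimizers with optimal value f*, and define the iteration x_{k+1} = x_k − (1/L)·(∇f(x_k))#. Then for all k ≥ 0, f(x_k) − f* ≤ 2·L·R²/(k+4), where R = max over x with f(x) ≤ f(x_0) of min over x* ∈ X* of ‖x − x*‖. -/
/-!
One step moves along the maximiser `s` of `⟪∇f(x), s⟫ - ‖s‖²/2`, whose value is at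
least `‖∇f(x)‖*²/2` (test it against `‖∇f(x)‖* • w` for a direction `w` attaining the
dual norm); the descent lemma then shows that a step decreases `f` by at least `‖∇f(x_k)‖*²/(2L)`.
The iterates stay in the sublevel set of `x₀`, so convexity bounds the gap
`δ_k = f(x_k) - f*` by `‖∇f(x_k)‖* R`. Hence `δ_k² ≤ 2LR² (δ_k - δ_{k+1})`, and with
`δ₀ ≤ LR²/2` (descent lemma at a minimiser, where the gradient vanishes) induction gives
`δ_k ≤ 2LR²/(k+4)`.
-/

open scoped RealInnerProductSpace
open Filter Topology

variable {E : Type*} [NormedAddCommGroup E] [InnerProductSpace ℝ E]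

def IsDualNorm (p : Seminorm ℝ E) (q : E → ℝ) : Prop :=
  ∀ z, IsGreatest {v : ℝ | ∃ w, p w ≤ 1 ∧ v = ⟪z, w⟫} (q z)

namespace IsDualNorm

variable {p : Seminorm ℝ E} {q : E → ℝ}

theorem nonneg (hq : IsDualNorm p q) (z : E) : 0 ≤ q z :=
  (hq z).2 ⟨0, by simp, by simp⟩

theorem inner_le_mul (hq : IsDualNorm p q) (z w : E) : ⟪z, w⟫ ≤ q z * p w := by
  -- `p w` may vanish for `w ≠ 0`, so normalise by `p w + ε` instead of `p w`.
  have hε : ∀ ε > 0, ⟪z, w⟫ ≤ q z * (p w + ε) := by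
    intro ε hε
    have hpos : 0 < p w + ε := by linarith [apply_nonneg p w]
    have hball : p ((p w + ε)⁻¹ • w) ≤ 1 := by
      rw [map_smul_eq_mul, Real.norm_eq_abs, abs_of_pos (inv_pos.2 hpos),
        inv_mul_le_iff₀ hpos]
      linarith
    have h := (hq z).2 ⟨_, hball, rfl⟩
    rwa [real_inner_smul_right, inv_mul_le_iff₀ hpos, mul_comm] at h
  have hlim : Tendsto (fun ε => q z * (p w + ε)) (𝓝[>] 0) (𝓝 (q z * p w)) := by
    have hcont : Continuous fun ε => q z * (p w + ε) := by fun_prop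
    simpa using hcont.continuousWithinAt (s := Set.Ioi 0) (x := 0) |>.tendsto
  exact ge_of_tendsto hlim (eventually_nhdsWithin_of_forall hε)

theorem sq_div_two_le_of_isMaxOn (hq : IsDualNorm p q) {z s : E}
    (hs : IsMaxOn (fun t => ⟪z, t⟫ - p t ^ 2 / 2) Set.univ s) :
    q z ^ 2 / 2 ≤ ⟪z, s⟫ - p s ^ 2 / 2 := by
  obtain ⟨w, hw, hzw⟩ := (hq z).1
  have h := isMaxOn_univ_iff.mp hs (q z • w)
  rw [real_inner_smul_right, map_smul_eq_mul, Real.norm_eq_abs, abs_of_nonneg (hq.nonneg z),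
    ← hzw] at h
  have : p w ^ 2 ≤ 1 := by nlinarith [apply_nonneg p w]
  nlinarith [sq_nonneg (q z)]

end IsDualNorm

section Gradient

variable [CompleteSpace E] {f : E → ℝ}

theorem HasGradientAt.hasDerivAt_comp_add_smul {g a d : E} {t : ℝ}
    (h : HasGradientAt f g (a + t • d)) :
    HasDerivAt (fun t : ℝ => f (a + t • d)) ⟪g, d⟫ t := by
  have hline : HasDerivAt (fun t : ℝ => a + t • d) d t := by
    simpa using ((hasDerivAt_id t).smul_const d).const_add a
  simpa [Function.comp_def] using h.hasFDerivAt.comp_hasDerivAt t hline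

theorem IsMinOn.hasGradientAt_eq_zero {g a : E} (h : IsMinOn f Set.univ a)
    (hg : HasGradientAt f g a) : g = 0 := by
  have hmin : IsLocalMin f a :=
    Eventually.of_forall (isMinOn_univ_iff.mp h)
  simpa using congrArg (InnerProductSpace.toDual ℝ E).symm
    (hmin.hasFDerivAt_eq_zero hg.hasFDerivAt)

theorem ConvexOn.add_inner_sub_le {g a : E} (hf : ConvexOn ℝ Set.univ f)
    (hg : HasGradientAt f g a) (b : E) : f a + ⟪g, b - a⟫ ≤ f b := by
  have hline : ConvexOn ℝ Set.univ (fun t : ℝ => f (a + t • (b - a))) := by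
    have hcomp : (fun t : ℝ => f (a + t • (b - a))) = f ∘ AffineMap.lineMap a b := by
      funext t
      simp [AffineMap.lineMap_apply, add_comm]
    simpa [hcomp] using hf.comp_affineMap (AffineMap.lineMap a b)
  have hderiv : HasDerivAt (fun t : ℝ => f (a + t • (b - a))) ⟪g, b - a⟫ 0 :=
    HasGradientAt.hasDerivAt_comp_add_smul (by simpa using hg)
  have hslope := hline.le_slope_of_hasDerivAt (Set.mem_univ 0) (Set.mem_univ 1)
    zero_lt_one hderiv
  simp only [slope_def_field, one_smul, zero_smul, add_zero, add_sub_cancel, sub_zero,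
    div_one] at hslope
  linarith

variable {p : Seminorm ℝ E} {q : E → ℝ} {f' : E → E} {L : ℝ}

theorem ConvexOn.sub_le_dualNorm_mul (hf : ConvexOn ℝ Set.univ f) (hq : IsDualNorm p q)
    {g a : E} (hg : HasGradientAt f g a) (b : E) : f a - f b ≤ q g * p (a - b) := by
  have h := hf.add_inner_sub_le hg b
  have hdual := hq.inner_le_mul g (a - b)
  rw [← neg_sub a b, inner_neg_right] at h
  linarith

theorem le_add_inner_add_sq_of_lipschitz_gradient (hq : IsDualNorm p q)
    (hgrad : ∀ x, HasGradientAt f (f' x) x) (hLip : ∀ x y, q (f' x - f' y) ≤ L * p (x - y))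
    (a b : E) : f b ≤ f a + ⟪f' a, b - a⟫ + L / 2 * p (b - a) ^ 2 := by
  set d := b - a
  set φ : ℝ → ℝ := fun t => f (a + t • d) - t * ⟪f' a, d⟫ - L / 2 * p d ^ 2 * t ^ 2
  have hφ : ∀ t, HasDerivAt φ (⟪f' (a + t • d) - f' a, d⟫ - L * p d ^ 2 * t) t := by
    intro t
    have h := (((hgrad (a + t • d)).hasDerivAt_comp_add_smul).sub
      ((hasDerivAt_id t).mul_const ⟪f' a, d⟫)).sub
      ((hasDerivAt_pow 2 t).const_mul (L / 2 * p d ^ 2))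
    refine h.congr_deriv ?_
    rw [inner_sub_left]
    simp only [one_mul, Nat.cast_ofNat, Nat.add_one_sub_one, pow_one, sub_right_inj]
    ring
  -- By the Lipschitz bound, `φ' t ≤ q (f' (a + t d) - f' a) p d - L t p d² ≤ 0` for `t > 0`.
  have hanti : AntitoneOn φ (Set.Icc 0 1) := by
    refine antitoneOn_of_hasDerivWithinAt_nonpos (convex_Icc 0 1)
      (fun t _ => (hφ t).continuousAt.continuousWithinAt)
      (fun t _ => (hφ t).hasDerivWithinAt) ?_
    intro t ht
    rw [interior_Icc] at ht
    have hdual := hq.inner_le_mul (f' (a + t • d) - f' a) d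
    have hlip := hLip (a + t • d) a
    rw [add_sub_cancel_left, map_smul_eq_mul, Real.norm_eq_abs, abs_of_pos ht.1] at hlip
    nlinarith [mul_le_mul_of_nonneg_right hlip (apply_nonneg p d)]
  have h01 := hanti (Set.left_mem_Icc.mpr zero_le_one) (Set.right_mem_Icc.mpr zero_le_one)
    zero_le_one
  simp only [φ, d, zero_smul, add_zero, one_smul, add_sub_cancel] at h01
  linarith

theorem le_sub_sq_div_of_isMaxOn (hq : IsDualNorm p q)
    (hgrad : ∀ x, HasGradientAt f (f' x) x) (hLip : ∀ x y, q (f' x - f' y) ≤ L * p (x - y))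
    (hL : 0 < L) {a s : E} (hs : IsMaxOn (fun t => ⟪f' a, t⟫ - p t ^ 2 / 2) Set.univ s) :
    f (a - (1 / L) • s) ≤ f a - q (f' a) ^ 2 / (2 * L) := by
  have hdesc := le_add_inner_add_sq_of_lipschitz_gradient hq hgrad hLip a (a - (1 / L) • s)
  rw [sub_sub_cancel_left, inner_neg_right, real_inner_smul_right, map_neg_eq_map,
    map_smul_eq_mul, Real.norm_eq_abs, abs_of_pos (one_div_pos.2 hL)] at hdesc
  calc f (a - (1 / L) • s) ≤ f a + -(1 / L * ⟪f' a, s⟫) + L / 2 * (1 / L * p s) ^ 2 := hdesc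
    _ = f a - (⟪f' a, s⟫ - p s ^ 2 / 2) / L := by field_simp; ring
    _ ≤ f a - q (f' a) ^ 2 / 2 / L := by gcongr; exact hq.sq_div_two_le_of_isMaxOn hs
    _ = f a - q (f' a) ^ 2 / (2 * L) := by ring

end Gradient

theorem le_div_add_of_sq_le_mul_sub {a : ℕ → ℝ} {A c : ℝ} (hA : 0 ≤ A) (hc : 1 ≤ c)
    (h0 : a 0 ≤ A / c) (hsq : ∀ k, a k ^ 2 ≤ A * (a k - a (k + 1))) (k : ℕ) :
    a k ≤ A / (k + c) := by
  induction k with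
  | zero => simpa using h0
  | succ k ih =>
    have hK : 1 ≤ (k : ℝ) + c := by linarith [k.cast_nonneg (α := ℝ)]
    rw [le_div_iff₀ (by linarith)] at ih
    rw [Nat.cast_succ, add_right_comm, le_div_iff₀ (by linarith)]
    rcases hA.eq_or_lt with rfl | hA
    · have h := hsq (k + 1)
      rw [zero_mul, sq_nonpos_iff] at h
      simp [h]
    · have ha : a k ≤ A := by nlinarith
      -- `(A - a K)(A - a) ≥ 0` gives `(A a - a²)(K + 1) ≤ A²`.
      have : A * (a (k + 1) * (k + c + 1)) ≤ A * A := by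
        nlinarith [mul_nonneg (sub_nonneg.2 ih) (sub_nonneg.2 ha),
          mul_le_mul_of_nonneg_right (hsq k) (by linarith : (0 : ℝ) ≤ k + c + 1)]
      exact le_of_mul_le_mul_left this hA

theorem stmt7_general {n : ℕ}
    (N Nd : EuclideanSpace ℝ (Fin n) → ℝ)
    (hNh : ∀ (c : ℝ) (x : EuclideanSpace ℝ (Fin n)), N (c • x) = |c| * N x)
    (hNt : ∀ x y, N (x + y) ≤ N x + N y)
    (hNd : ∀ z, IsGreatest {v : ℝ | ∃ w, N w ≤ 1 ∧ v = ⟪z, w⟫} (Nd z))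
    (sharp : EuclideanSpace ℝ (Fin n) → EuclideanSpace ℝ (Fin n))
    (hsharp : ∀ z s, ⟪z, s⟫ - N s ^ 2 / 2 ≤ ⟪z, sharp z⟫ - N (sharp z) ^ 2 / 2)
    (f : EuclideanSpace ℝ (Fin n) → ℝ)
    (f' : EuclideanSpace ℝ (Fin n) → EuclideanSpace ℝ (Fin n))
    (hconv : ConvexOn ℝ Set.univ f)
    (hgrad : ∀ x, HasGradientAt f (f' x) x)
    (L : ℝ) (hL : 0 < L)
    (hLip : ∀ x y, Nd (f' x - f' y) ≤ L * N (x - y))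
    (xstar : EuclideanSpace ℝ (Fin n)) (hxstar : IsMinOn f Set.univ xstar)
    (fstar : ℝ) (hfstar : fstar = f xstar)
    (x : ℕ → EuclideanSpace ℝ (Fin n))
    (hx : ∀ k, x (k + 1) = x k - (1 / L) • sharp (f' (x k)))
    (R : ℝ)
    (hR : ∀ z, f z ≤ f (x 0) →
      ∃ xs, IsMinOn f Set.univ xs ∧ N (z - xs) ≤ R) :
    ∀ k : ℕ, f (x k) - fstar ≤ 2 * L * R ^ 2 / ((k : ℝ) + 4) := by
  let p : Seminorm ℝ (EuclideanSpace ℝ (Fin n)) :=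
    Seminorm.of N hNt fun c z => by rw [hNh, Real.norm_eq_abs]
  have hq : IsDualNorm p Nd := hNd
  have hopt : ∀ xs, IsMinOn f Set.univ xs → f xs = fstar := fun xs hxs =>
    hfstar ▸ le_antisymm (hxs (Set.mem_univ xstar)) (hxstar (Set.mem_univ xs))
  have hstep : ∀ k, f (x (k + 1)) ≤ f (x k) - Nd (f' (x k)) ^ 2 / (2 * L) := fun k => by
    rw [hx k]
    exact le_sub_sq_div_of_isMaxOn hq hgrad hLip hL (isMaxOn_univ_iff.mpr (hsharp _))
  have hsub : ∀ k, f (x k) ≤ f (x 0) := fun k =>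
    antitone_nat_of_succ_le (f := fun k => f (x k))
      (fun k => (hstep k).trans (sub_le_self _ (by positivity))) k.zero_le
  have hgap : ∀ k, 0 ≤ f (x k) - fstar ∧ f (x k) - fstar ≤ Nd (f' (x k)) * R := fun k => by
    obtain ⟨xs, hxs, hxsR⟩ := hR _ (hsub k)
    rw [← hopt xs hxs]
    exact ⟨sub_nonneg.2 (hxs (Set.mem_univ _)),
      (hconv.sub_le_dualNorm_mul hq (hgrad _) xs).trans
        (mul_le_mul_of_nonneg_left hxsR (hq.nonneg _))⟩
  obtain ⟨x₀, hx₀, hx₀R⟩ := hR (x 0) le_rfl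
  have hdesc := le_add_inner_add_sq_of_lipschitz_gradient hq hgrad hLip x₀ (x 0)
  rw [hx₀.hasGradientAt_eq_zero (hgrad x₀), inner_zero_left, hopt x₀ hx₀] at hdesc
  have hR₀ : p (x 0 - x₀) ^ 2 ≤ R ^ 2 := pow_le_pow_left₀ (apply_nonneg p _) hx₀R 2
  refine le_div_add_of_sq_le_mul_sub (by positivity) (by norm_num) (by nlinarith) fun k => ?_
  calc (f (x k) - fstar) ^ 2 ≤ (Nd (f' (x k)) * R) ^ 2 := pow_le_pow_left₀ (hgap k).1 (hgap k).2 2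
    _ = 2 * L * R ^ 2 * (Nd (f' (x k)) ^ 2 / (2 * L)) := by field_simp
    _ ≤ 2 * L * R ^ 2 * (f (x k) - fstar - (f (x (k + 1)) - fstar)) := by
      gcongr
      linarith [hstep k]

theorem stmt7 {n : ℕ}
    (N Nd : EuclideanSpace ℝ (Fin n) → ℝ)
    (hN0 : ∀ x, N x = 0 ↔ x = 0)
    (hNh : ∀ (c : ℝ) (x : EuclideanSpace ℝ (Fin n)), N (c • x) = |c| * N x)
    (hNt : ∀ x y, N (x + y) ≤ N x + N y)
    (hNd : ∀ z, IsGreatest {v : ℝ | ∃ w, N w ≤ 1 ∧ v = ⟪z, w⟫} (Nd z))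
    (sharp : EuclideanSpace ℝ (Fin n) → EuclideanSpace ℝ (Fin n))
    (hsharp : ∀ z s, ⟪z, s⟫ - N s ^ 2 / 2 ≤ ⟪z, sharp z⟫ - N (sharp z) ^ 2 / 2)
    (f : EuclideanSpace ℝ (Fin n) → ℝ)
    (f' : EuclideanSpace ℝ (Fin n) → EuclideanSpace ℝ (Fin n))
    (hconv : ConvexOn ℝ Set.univ f)
    (hgrad : ∀ x, HasGradientAt f (f' x) x)
    (hcont : Continuous f')
    (L : ℝ) (hL : 0 < L)
    (hLip : ∀ x y, Nd (f' x - f' y) ≤ L * N (x - y))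
    (xstar : EuclideanSpace ℝ (Fin n)) (hxstar : IsMinOn f Set.univ xstar)
    (fstar : ℝ) (hfstar : fstar = f xstar)
    (x : ℕ → EuclideanSpace ℝ (Fin n))
    (hx : ∀ k, x (k + 1) = x k - (1 / L) • sharp (f' (x k)))
    (R : ℝ)
    (hR : ∀ z, f z ≤ f (x 0) →
      ∃ xs, IsMinOn f Set.univ xs ∧ N (z - xs) ≤ R) :
    ∀ k : ℕ, f (x k) - fstar ≤ 2 * L * R ^ 2 / ((k : ℝ) + 4) :=
  stmt7_general N Nd hNh hNt hNd sharp hsharp f f' hconv hgrad L hL hLip xstar hxstar fstar hfstar x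
    hx R hR
end

section
/- The function smax_t is convex, and its gradient is Lipschitz continuous with constant 1/t with respect to the infinity norm: for all x,y ∈ R^m, ‖∇smax_t(x) − ∇smax_t(y)‖₁ ≤ (1/t)·‖x−y‖∞. Equivalently, its Hessian satisfies 0 ≤ yᵀ(∇²smax_t(x))y ≤ (1/t)‖y‖∞² for all x,y. -/
/-!
Writing `y = (x/t, -x/t) ∈ ℝ^(2m)`, `smax_t x = t * (log ∑ⱼ exp yⱼ - log (2m))` is a scaled
log-sum-exp composed with a linear map, and its gradient is the difference of the two halves of
`softmax y`. Log-sum-exp is convex by Hölder's inequality. Along a segment `y' + s • u`, the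
derivative of `∑ⱼ εⱼ softmaxⱼ` is `∑ⱼ pⱼ εⱼ (uⱼ - ū)` with `p` the softmax weights and `ū` the
`p`-mean of `u`; for `|εⱼ| ≤ 1` this is at most the mean absolute deviation of `u`, hence at most
`‖u‖∞` by Cauchy–Schwarz. Taking `ε` to be the signs of `softmax y - softmax y'`, the mean value
theorem gives `‖softmax y - softmax y'‖₁ ≤ ‖y - y'‖∞`, and the triangle inequality transfers this
to the gradient, with the factor `1/t` coming from the scaling `y = (x/t, -x/t)`.
-/

open Real Finset

noncomputable section

section LogSumExp

variable {ι : Type*} [Fintype ι]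

def logSumExp (y : ι → ℝ) : ℝ := log (∑ i, exp (y i))

def softmax (y : ι → ℝ) (i : ι) : ℝ := exp (y i) / ∑ j, exp (y j)

lemma sum_exp_pos [Nonempty ι] (y : ι → ℝ) : 0 < ∑ i, exp (y i) :=
  sum_pos (fun i _ => exp_pos (y i)) univ_nonempty

lemma softmax_pos [Nonempty ι] (y : ι → ℝ) (i : ι) : 0 < softmax y i :=
  div_pos (exp_pos _) (sum_exp_pos y)

lemma sum_softmax [Nonempty ι] (y : ι → ℝ) : ∑ i, softmax y i = 1 := by
  simp only [softmax, ← sum_div, div_self (sum_exp_pos y).ne']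

/-- Hölder's inequality with exponents `1/a` and `1/b`, including the endpoint cases `a = 0` and
`b = 0` that `Real.inner_le_Lp_mul_Lq` excludes. -/
lemma sum_rpow_mul_rpow_le [Nonempty ι] {f g : ι → ℝ} (hf : ∀ i, 0 < f i) (hg : ∀ i, 0 < g i)
    {a b : ℝ} (ha : 0 ≤ a) (hb : 0 ≤ b) (hab : a + b = 1) :
    ∑ i, f i ^ a * g i ^ b ≤ (∑ i, f i) ^ a * (∑ i, g i) ^ b := by
  have hF : 0 < ∑ i, f i := sum_pos (fun i _ => hf i) univ_nonempty
  have hG : 0 < ∑ i, g i := sum_pos (fun i _ => hg i) univ_nonempty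
  set F := ∑ i, f i
  set G := ∑ i, g i
  have hFG : 0 < F ^ a * G ^ b := by positivity
  have amgm : ∀ i, f i ^ a * g i ^ b ≤ F ^ a * G ^ b * (a * (f i / F) + b * (g i / G)) := by
    intro i
    have h := geom_mean_le_arith_mean2_weighted ha hb (div_pos (hf i) hF).le
      (div_pos (hg i) hG).le hab
    rw [div_rpow (hf i).le hF.le, div_rpow (hg i).le hG.le, div_mul_div_comm,
      div_le_iff₀ hFG] at h
    linarith
  calc ∑ i, f i ^ a * g i ^ b ≤ ∑ i, F ^ a * G ^ b * (a * (f i / F) + b * (g i / G)) :=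
        sum_le_sum fun i _ => amgm i
    _ = F ^ a * G ^ b := by
        rw [← mul_sum, sum_add_distrib, ← mul_sum, ← mul_sum, ← sum_div, ← sum_div,
          div_self hF.ne', div_self hG.ne', mul_one, mul_one, hab, mul_one]

lemma convexOn_logSumExp [Nonempty ι] : ConvexOn ℝ Set.univ (logSumExp : (ι → ℝ) → ℝ) := by
  refine ⟨convex_univ, fun x _ y _ a b ha hb hab => ?_⟩
  have holder : ∑ i, exp ((a • x + b • y) i) ≤ (∑ i, exp (x i)) ^ a * (∑ i, exp (y i)) ^ b := by
    convert sum_rpow_mul_rpow_le (fun i => exp_pos (x i)) (fun i => exp_pos (y i)) ha hb hab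
      using 2 with i
    simp only [Pi.add_apply, Pi.smul_apply, smul_eq_mul, ← exp_mul, ← exp_add]
    ring_nf
  calc logSumExp (a • x + b • y)
      ≤ log ((∑ i, exp (x i)) ^ a * (∑ i, exp (y i)) ^ b) :=
        log_le_log (sum_exp_pos _) holder
    _ = a • logSumExp x + b • logSumExp y := by
        rw [log_mul (rpow_pos_of_pos (sum_exp_pos x) a).ne' (rpow_pos_of_pos (sum_exp_pos y) b).ne',
          log_rpow (sum_exp_pos x), log_rpow (sum_exp_pos y)]
        rfl

lemma hasDerivAt_sum_exp_line (y u : ι → ℝ) (s : ℝ) :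
    HasDerivAt (fun s : ℝ => ∑ i, exp ((y + s • u) i)) (∑ i, exp ((y + s • u) i) * u i) s := by
  simp only [Pi.add_apply, Pi.smul_apply, smul_eq_mul]
  exact HasDerivAt.fun_sum fun i _ => ((hasDerivAt_mul_const (u i)).const_add (y i)).exp

lemma hasDerivAt_logSumExp_line [Nonempty ι] (y u : ι → ℝ) (s : ℝ) :
    HasDerivAt (fun s : ℝ => logSumExp (y + s • u)) (∑ i, softmax (y + s • u) i * u i) s := by
  refine ((hasDerivAt_sum_exp_line y u s).log (sum_exp_pos _).ne').congr_deriv ?_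
  simp only [softmax, div_mul_eq_mul_div, sum_div]

lemma hasDerivAt_softmax_line [Nonempty ι] (y u : ι → ℝ) (s : ℝ) (i : ι) :
    HasDerivAt (fun s : ℝ => softmax (y + s • u) i)
      (softmax (y + s • u) i * (u i - ∑ j, softmax (y + s • u) j * u j)) s := by
  have hexp : HasDerivAt (fun s : ℝ => exp ((y + s • u) i)) (exp ((y + s • u) i) * u i) s := by
    simp only [Pi.add_apply, Pi.smul_apply, smul_eq_mul]
    exact ((hasDerivAt_mul_const (u i)).const_add (y i)).exp
  refine (hexp.div (hasDerivAt_sum_exp_line y u s) (sum_exp_pos _).ne').congr_deriv ?_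
  simp only [softmax, div_mul_eq_mul_div, ← sum_div]
  field_simp

lemma sum_mul_abs_sub_mean_le {p u : ι → ℝ} (hp : ∀ i, 0 ≤ p i) (hp1 : ∑ i, p i = 1) {K : ℝ}
    (hu : ∀ i, |u i| ≤ K) : ∑ i, p i * |u i - ∑ j, p j * u j| ≤ K := by
  set μ := ∑ j, p j * u j
  obtain ⟨i₀, -⟩ := nonempty_of_sum_ne_zero (hp1.trans_ne one_ne_zero)
  have hK : 0 ≤ K := (abs_nonneg _).trans (hu i₀)
  have cauchySchwarz : (∑ i, p i * |u i - μ|) ^ 2 ≤ (∑ i, p i) * ∑ i, p i * (u i - μ) ^ 2 :=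
    sum_sq_le_sum_mul_sum_of_sq_le_mul _ (fun i _ => hp i)
      (fun i _ => mul_nonneg (hp i) (sq_nonneg _))
      (fun i _ => le_of_eq (by rw [mul_pow, sq_abs]; ring))
  have variance : ∑ i, p i * (u i - μ) ^ 2 = ∑ i, p i * u i ^ 2 - μ ^ 2 := by
    have h : ∀ i, p i * (u i - μ) ^ 2 = p i * u i ^ 2 - 2 * μ * (p i * u i) + μ ^ 2 * p i :=
      fun i => by ring
    simp only [h, sum_add_distrib, sum_sub_distrib, ← mul_sum, hp1]
    ring
  have second_moment : ∑ i, p i * u i ^ 2 ≤ K ^ 2 := by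
    calc ∑ i, p i * u i ^ 2 ≤ ∑ i, p i * K ^ 2 :=
          sum_le_sum fun i _ =>
            mul_le_mul_of_nonneg_left (sq_le_sq.2 ((hu i).trans (le_abs_self K))) (hp i)
      _ = K ^ 2 := by rw [← sum_mul, hp1, one_mul]
  rw [hp1, one_mul, variance] at cauchySchwarz
  exact le_of_sq_le_sq (by linarith [sq_nonneg μ]) hK

lemma sum_abs_softmax_sub_le [Nonempty ι] (y y' : ι → ℝ) :
    ∑ i, |softmax y i - softmax y' i| ≤ ‖y - y'‖ := by
  set u := y - y'
  set ε : ι → ℝ := fun i => SignType.sign (softmax y i - softmax y' i)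
  have hε : ∀ i, |ε i| ≤ 1 := fun i => by
    simp only [ε]
    generalize SignType.sign (softmax y i - softmax y' i) = s
    cases s <;> simp [SignType.cast]
  set p : ℝ → ι → ℝ := fun s => softmax (y' + s • u)
  set φ : ℝ → ℝ := fun s => ∑ i, ε i * p s i
  set φ' : ℝ → ℝ := fun s => ∑ i, ε i * (p s i * (u i - ∑ j, p s j * u j))
  have hφ : ∀ s, HasDerivAt φ (φ' s) s :=
    fun s => HasDerivAt.fun_sum fun i _ => (hasDerivAt_softmax_line y' u s i).const_mul (ε i)
  have bound : ∀ s, ‖φ' s‖ ≤ ‖u‖ := fun s =>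
    calc ‖φ' s‖ ≤ ∑ i, ‖ε i * (p s i * (u i - ∑ j, p s j * u j))‖ := norm_sum_le _ _
      _ ≤ ∑ i, p s i * |u i - ∑ j, p s j * u j| := sum_le_sum fun i _ => by
          rw [Real.norm_eq_abs, abs_mul, abs_mul, abs_of_pos (softmax_pos _ i)]
          exact mul_le_of_le_one_left (mul_nonneg (softmax_pos _ i).le (abs_nonneg _)) (hε i)
      _ ≤ ‖u‖ := sum_mul_abs_sub_mean_le (fun i => (softmax_pos _ i).le) (sum_softmax _)
          (fun i => norm_le_pi_norm u i)
  have mvt := norm_image_sub_le_of_norm_deriv_le_segment_01' (fun s _ => (hφ s).hasDerivWithinAt)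
    (fun s _ => bound s)
  have endpoints : φ 1 - φ 0 = ∑ i, |softmax y i - softmax y' i| := by
    simp only [φ, p, u, one_smul, zero_smul, add_zero, add_sub_cancel, ← sum_sub_distrib,
      ← mul_sub]
    exact sum_congr rfl fun i _ => sign_mul_self _
  exact endpoints ▸ (le_norm_self _).trans mvt

end LogSumExp

section SignedPair

variable {ι : Type*}

def signedPair : (ι → ℝ) →ₗ[ℝ] (ι × Bool → ℝ) where
  toFun x j := if j.2 then x j.1 else -x j.1
  map_add' x y := by ext ⟨i, _ | _⟩ <;> simp [add_comm]
  map_smul' c x := by ext ⟨i, _ | _⟩ <;> simp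

@[simp]
lemma signedPair_apply_true (x : ι → ℝ) (i : ι) : signedPair x (i, true) = x i := rfl

@[simp]
lemma signedPair_apply_false (x : ι → ℝ) (i : ι) : signedPair x (i, false) = -x i := rfl

variable [Fintype ι]

lemma norm_signedPair_le (x : ι → ℝ) : ‖signedPair x‖ ≤ ‖x‖ :=
  (pi_norm_le_iff_of_nonneg (norm_nonneg x)).2 fun ⟨i, b⟩ => by
    cases b <;> simpa using norm_le_pi_norm x i

lemma sum_exp_signedPair (x : ι → ℝ) :
    ∑ j, exp (signedPair x j) = ∑ i, (exp (x i) + exp (-x i)) := by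
  simp only [Fintype.sum_prod_type, Fintype.sum_bool, signedPair_apply_true, signedPair_apply_false]

def signedSoftmax (x : ι → ℝ) (i : ι) : ℝ :=
  softmax (signedPair x) (i, true) - softmax (signedPair x) (i, false)

lemma signedSoftmax_eq (x : ι → ℝ) (i : ι) :
    signedSoftmax x i = (exp (x i) - exp (-x i)) / ∑ j, (exp (x j) + exp (-x j)) := by
  simp only [signedSoftmax, softmax, sum_exp_signedPair, signedPair_apply_true,
    signedPair_apply_false, sub_div]

lemma hasDerivAt_logSumExp_signedPair_line [Nonempty ι] (x u : ι → ℝ) :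
    HasDerivAt (fun s : ℝ => logSumExp (signedPair (x + s • u)))
      (∑ i, signedSoftmax x i * u i) 0 := by
  have h := hasDerivAt_logSumExp_line (signedPair x) (signedPair u) 0
  simp only [zero_smul, add_zero, ← map_smul, ← map_add] at h
  refine h.congr_deriv ?_
  simp only [Fintype.sum_prod_type, Fintype.sum_bool, signedPair_apply_true, signedPair_apply_false,
    signedSoftmax]
  exact sum_congr rfl fun i _ => by ring

lemma sum_abs_signedSoftmax_sub_le [Nonempty ι] (x x' : ι → ℝ) :
    ∑ i, |signedSoftmax x i - signedSoftmax x' i| ≤ ‖x - x'‖ :=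
  calc ∑ i, |signedSoftmax x i - signedSoftmax x' i|
      ≤ ∑ i, ∑ b, |softmax (signedPair x) (i, b) - softmax (signedPair x') (i, b)| :=
        sum_le_sum fun i _ => by
          rw [signedSoftmax, signedSoftmax, Fintype.sum_bool, sub_sub_sub_comm]
          exact abs_sub _ _
    _ = ∑ j, |softmax (signedPair x) j - softmax (signedPair x') j| :=
        (Fintype.sum_prod_type fun j => |softmax (signedPair x) j - softmax (signedPair x') j|).symm
    _ ≤ ‖signedPair x - signedPair x'‖ := sum_abs_softmax_sub_le _ _
    _ ≤ ‖x - x'‖ := by rw [← map_sub]; exact norm_signedPair_le _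

end SignedPair

end

theorem stmt12 {m : ℕ} (t : ℝ) (ht : 0 < t)
    (smax : (Fin m → ℝ) → ℝ)
    (hsmax : ∀ z, smax z =
      t * Real.log ((∑ e, (Real.exp (z e / t) + Real.exp (-z e / t))) / (2 * m)))
    (g : (Fin m → ℝ) → Fin m → ℝ)
    (hg : ∀ z e, g z e = (Real.exp (z e / t) - Real.exp (-z e / t)) /
      ∑ e', (Real.exp (z e' / t) + Real.exp (-z e' / t))) :
    ConvexOn ℝ Set.univ smax ∧
    (∀ z v : Fin m → ℝ,
      HasDerivAt (fun τ : ℝ => smax (z + τ • v)) (∑ e, g z e * v e) 0) ∧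
    (∀ z w : Fin m → ℝ, ∑ e, |g z e - g w e| ≤ (1 / t) * ‖z - w‖) := by
  obtain rfl | hm := m.eq_zero_or_pos
  · -- `smax z = t * log (0 / 0) = 0`
    have hzero : smax = fun _ => 0 := funext fun z => by simp [hsmax]
    subst hzero
    exact ⟨convexOn_const 0 convex_univ,
      fun _ _ => by simpa using hasDerivAt_const (0 : ℝ) (0 : ℝ), fun z w => by simp; positivity⟩
  have : Nonempty (Fin m) := ⟨⟨0, hm⟩⟩
  have hscale : ∀ (z : Fin m → ℝ) e, (t⁻¹ • z) e = z e / t :=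
    fun z e => by simp [div_eq_inv_mul]
  have hsmax' : smax = fun z => t * logSumExp (signedPair (t⁻¹ • z)) - t * log (2 * m) :=
    funext fun z => by
      simp only [logSumExp, sum_exp_signedPair, hscale, ← neg_div]
      rw [hsmax, log_div (sum_pos (fun _ _ => by positivity) univ_nonempty).ne' (by positivity),
        mul_sub]
  have hg' : ∀ z, g z = signedSoftmax (t⁻¹ • z) := fun z => funext fun e => by
    simp only [hg, signedSoftmax_eq, hscale, ← neg_div]
  refine ⟨?_, fun z v => ?_, fun z w => ?_⟩
  · rw [hsmax']
    refine ConvexOn.sub ?_ (concaveOn_const _ convex_univ)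
    refine ConvexOn.smul ht.le ?_
    exact convexOn_logSumExp.comp_linearMap
      (signedPair ∘ₗ (t⁻¹ • LinearMap.id (R := ℝ) (M := Fin m → ℝ)))
  · have h := ((hasDerivAt_logSumExp_signedPair_line (t⁻¹ • z) (t⁻¹ • v)).const_mul t).sub_const
      (t * log (2 * m))
    rw [hsmax', hg']
    simp only [smul_add, smul_comm t⁻¹] at h ⊢
    refine h.congr_deriv ?_
    simp only [mul_sum, Pi.smul_apply, smul_eq_mul]
    exact sum_congr rfl fun e _ => by field_simp
  · calc ∑ e, |g z e - g w e| ≤ ‖t⁻¹ • z - t⁻¹ • w‖ := by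
          simpa only [hg'] using sum_abs_signedSoftmax_sub_le (t⁻¹ • z) (t⁻¹ • w)
      _ = 1 / t * ‖z - w‖ := by
          rw [← smul_sub, norm_smul, norm_inv, Real.norm_of_nonneg ht.le, one_div]
end

section
/- Any almost j-tree in which every vertex has degree at least 3 has at most 3j − 2 vertices. -/
/-!
Let `F` be the forest left after deleting the edges inside `J`. A vertex outside `J` loses no
edge, so it still has degree at least 3 in `F`. Summing degrees, `3 (n - |J|) ≤ 2 |E(F)|`, and a
forest on `n ≥ 1` vertices has at most `n - 1` edges; hence `n ≤ 3 |J| - 2`.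
-/

open Finset

namespace SimpleGraph

variable {V : Type*} {G : SimpleGraph V}

/-- A finite forest embeds in a spanning tree of the complete graph, which has `card V - 1` edges. -/
theorem IsAcyclic.card_edgeFinset_add_one_le [Fintype V] [Nonempty V] [Fintype G.edgeSet]
    (hG : G.IsAcyclic) : #G.edgeFinset + 1 ≤ Fintype.card V := by
  classical
  obtain ⟨T, hGT, hT⟩ := (⊤ : SimpleGraph V).exists_maximal_isAcyclic_of_le_isAcyclic le_top hG
  have hTree : T.IsTree := (connected_top.maximal_le_isAcyclic_iff_isTree le_top).mp hT
  rw [← hTree.card_edgeFinset]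
  exact Nat.add_le_add_right (card_le_card (edgeFinset_mono hGT)) 1

theorem degree_deleteEdges_of_forall_notMem (s : Set (Sym2 V)) {v : V}
    (hv : ∀ e ∈ s, v ∉ e) [Fintype (G.neighborSet v)]
    [Fintype ((G.deleteEdges s).neighborSet v)] :
    (G.deleteEdges s).degree v = G.degree v := by
  refine le_antisymm (degree_le_of_le (deleteEdges_le s)) (card_le_card fun w hw => ?_)
  rw [mem_neighborFinset] at hw ⊢
  exact deleteEdges_adj.mpr ⟨hw, fun hs => hv _ hs (Sym2.mem_mk_left v w)⟩

theorem IsAcyclic.card_add_two_le_three_mul_card [Fintype V] [DecidableEq V] [Nonempty V]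
    [DecidableRel G.Adj] (hG : G.IsAcyclic) (J : Finset V) (hdeg : ∀ v ∉ J, 3 ≤ G.degree v) :
    Fintype.card V + 2 ≤ 3 * #J := by
  have hsum : 3 * #Jᶜ ≤ 2 * #G.edgeFinset :=
    calc 3 * #Jᶜ = ∑ _v ∈ Jᶜ, 3 := by rw [sum_const, smul_eq_mul, mul_comm]
      _ ≤ ∑ v ∈ Jᶜ, G.degree v := sum_le_sum fun v hv => hdeg v (mem_compl.mp hv)
      _ ≤ ∑ v, G.degree v := sum_le_sum_of_subset (subset_univ _)
      _ = 2 * #G.edgeFinset := G.sum_degrees_eq_twice_card_edges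
  have hedges := hG.card_edgeFinset_add_one_le
  have hJ : #J ≤ Fintype.card V := card_le_univ J
  rw [card_compl] at hsum
  omega

end SimpleGraph

theorem stmt17_general {V : Type*} [Fintype V] [DecidableEq V]
    (G : SimpleGraph V) [DecidableRel G.Adj]
    (j : ℕ) (J : Finset V) (hJcard : J.card ≤ j)
    (hforest : (G.deleteEdges {e : Sym2 V | ∀ v ∈ e, v ∈ J}).IsAcyclic)
    (hdeg : ∀ v : V, 3 ≤ G.degree v) :
    Fintype.card V ≤ 3 * j - 2 := by
  cases isEmpty_or_nonempty V
  · simp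
  have hdegF : ∀ v ∉ J, 3 ≤ (G.deleteEdges {e : Sym2 V | ∀ v ∈ e, v ∈ J}).degree v := by
    intro v hv
    rw [SimpleGraph.degree_deleteEdges_of_forall_notMem]
    · exact hdeg v
    · exact fun e he hve => hv (he v hve)
  have := hforest.card_add_two_le_three_mul_card J hdegF
  omega

/-- An almost `j`-tree with minimum degree at least 3 has at most `3j - 2` vertices. -/
theorem stmt17 {V : Type*} [Fintype V] [DecidableEq V]
    (G : SimpleGraph V) [DecidableRel G.Adj]
    (j : ℕ) (hj : 1 ≤ j) (J : Finset V) (hJcard : J.card ≤ j)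
    (hforest : (G.deleteEdges {e : Sym2 V | ∀ v ∈ e, v ∈ J}).IsAcyclic)
    (hdeg : ∀ v : V, 3 ≤ G.degree v) :
    Fintype.card V ≤ 3 * j - 2 :=
  stmt17_general G j J hJcard hforest hdeg
end
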